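/- Let A ⊆ B be commutative semirings, S = A[x₁,…,xₙ], and ρ a prime congruence on B. For T₁, T₂ ⊆ S × S, define Z_ρ(T)(B) = {P ∈ Bⁿ : (f(P), g(P)) ∈ ρ for all (f,g) ∈ T}. Then Z_ρ(T₁)(B) ∪ Z_ρ(T₂)(B) = Z_ρ(T₁ ∗ T₂)(B), where T₁ ∗ T₂ = {(f₁,g₁) ∗ (f₂,g₂) : (f₁,g₁) ∈ T₁, (f₂,g₂) ∈ T₂} with (f₁,g₁) ∗ (f₂,g₂) = (f₁f₂ + g₁g₂, f₁g₂ + f₂g₁). Consequently arbitrary intersections and finite unions of ρ-algebraic varieties are ρ-algebraic varieties, and ∅ and Bⁿ are ρ-algebraic varieties, so the ρ-algebraic varieties form the closed sets of a topology on Bⁿ. -/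

import Mathlib

/-!
Evaluation at a point `P` sends `tmul` to `tmul`, so `P ∈ Z_ρ(T₁ ∗ T₂)` says that
`tmul u v ∈ ρ` for the value pairs `u`, `v` of all members of `T₁` and `T₂`. A congruence
absorbs `tmul` from either factor, which gives `⊆`; primality gives `⊇`, since a single pair
of `T₁` outside `ρ` at `P` forces every pair of `T₂` into `ρ`. Intersections of zero sets are
zero sets of unions, `Z_ρ(∅) = Bⁿ`, and `Z_ρ({(1, 0)}) = ∅` because `(1, 0) ∈ ρ` would make
`ρ` total.
-/

/-- The twisted product on `S × S`. -/
def tmul {S : Type*} [CommSemiring S] (p q : S × S) : S × S :=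
  (p.1 * q.1 + p.2 * q.2, p.1 * q.2 + p.2 * q.1)

/-- `ρ` is a congruence on the commutative semiring `B`. -/
def IsCong {B : Type*} [CommSemiring B] (ρ : Set (B × B)) : Prop :=
  (∀ a : B, (a, a) ∈ ρ) ∧
  (∀ a b : B, (a, b) ∈ ρ → (b, a) ∈ ρ) ∧
  (∀ a b c : B, (a, b) ∈ ρ → (b, c) ∈ ρ → (a, c) ∈ ρ) ∧
  (∀ a b c d : B, (a, b) ∈ ρ → (c, d) ∈ ρ → (a + c, b + d) ∈ ρ) ∧
  (∀ a b c d : B, (a, b) ∈ ρ → (c, d) ∈ ρ → (a * c, b * d) ∈ ρ)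

/-- Evaluation of a polynomial over the subsemiring `A ⊆ B` at a point of `Bⁿ`. -/
noncomputable def evalAt {B : Type*} [CommSemiring B] (A : Subsemiring B) {n : ℕ}
    (P : Fin n → B) (f : MvPolynomial (Fin n) A) : B :=
  MvPolynomial.eval₂ A.subtype P f

/-- The `ρ`-zero set of `T ⊆ S × S` in `Bⁿ`, where `S = A[x₁,…,xₙ]`. -/
def Zset {B : Type*} [CommSemiring B] (A : Subsemiring B) {n : ℕ} (ρ : Set (B × B))
    (T : Set (MvPolynomial (Fin n) A × MvPolynomial (Fin n) A)) : Set (Fin n → B) :=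
  {P | ∀ fg ∈ T, (evalAt A P fg.1, evalAt A P fg.2) ∈ ρ}

open MvPolynomial Topology

theorem tmul_comm {S : Type*} [CommSemiring S] (p q : S × S) : tmul p q = tmul q p := by
  simp only [tmul, Prod.mk.injEq]
  constructor <;> ring

namespace IsCong

variable {B : Type*} [CommSemiring B] {ρ : Set (B × B)}

theorem tmul_mem_left (hρ : IsCong ρ) {p : B × B} (q : B × B) (hp : p ∈ ρ) :
    tmul p q ∈ ρ := by
  obtain ⟨hrefl, hsymm, -, hadd, hmul⟩ := hρ
  obtain ⟨a, b⟩ := p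
  obtain ⟨c, d⟩ := q
  have hac : (a * c, b * c) ∈ ρ := hmul _ _ _ _ hp (hrefl c)
  have hbd : (b * d, a * d) ∈ ρ := hmul _ _ _ _ (hsymm _ _ hp) (hrefl d)
  simpa only [tmul, add_comm (b * c)] using hadd _ _ _ _ hac hbd

theorem tmul_mem_right (hρ : IsCong ρ) (p : B × B) {q : B × B} (hq : q ∈ ρ) :
    tmul p q ∈ ρ :=
  tmul_comm p q ▸ hρ.tmul_mem_left p hq

theorem one_zero_notMem (hρ : IsCong ρ) (hproper : ρ ≠ Set.univ) : ((1 : B), (0 : B)) ∉ ρ := by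
  obtain ⟨hrefl, hsymm, htrans, -, hmul⟩ := hρ
  intro h10
  have hzero : ∀ a : B, (a, (0 : B)) ∈ ρ := fun a => by
    simpa only [mul_one, mul_zero] using hmul _ _ _ _ (hrefl a) h10
  exact hproper (Set.eq_univ_of_forall fun ⟨a, b⟩ => htrans _ _ _ (hzero a) (hsymm _ _ (hzero b)))

end IsCong

section ZeroSets

variable {B : Type*} [CommSemiring B] (A : Subsemiring B) {n : ℕ} (ρ : Set (B × B))

theorem evalAt_tmul (P : Fin n → B) (p q : MvPolynomial (Fin n) A × MvPolynomial (Fin n) A) :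
    (evalAt A P (tmul p q).1, evalAt A P (tmul p q).2) =
      tmul (evalAt A P p.1, evalAt A P p.2) (evalAt A P q.1, evalAt A P q.2) := by
  simp only [tmul, evalAt, eval₂_add, eval₂_mul]

theorem Zset_empty : Zset A ρ (∅ : Set (MvPolynomial (Fin n) A × MvPolynomial (Fin n) A)) =
    Set.univ := by
  simp [Zset]

theorem Zset_one_zero (hρ : IsCong ρ) (hproper : ρ ≠ Set.univ) :
    Zset A ρ {((1 : MvPolynomial (Fin n) A), (0 : MvPolynomial (Fin n) A))} = ∅ :=
  Set.eq_empty_of_forall_notMem fun P hP => hρ.one_zero_notMem hproper <| by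
    simpa only [evalAt, eval₂_one, eval₂_zero] using hP _ rfl

theorem iInter_Zset {κ : Sort*} (T : κ → Set (MvPolynomial (Fin n) A × MvPolynomial (Fin n) A)) :
    ⋂ i, Zset A ρ (T i) = Zset A ρ (⋃ i, T i) := by
  ext P
  simp only [Set.mem_iInter, Zset, Set.mem_ofPred_eq, Set.mem_iUnion]
  exact ⟨fun h fg ⟨i, hi⟩ => h i fg hi, fun h i fg hi => h fg ⟨i, hi⟩⟩

theorem Zset_union_Zset (hρ : IsCong ρ)
    (hprime : ∀ p q : B × B, tmul p q ∈ ρ → p ∈ ρ ∨ q ∈ ρ)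
    (T₁ T₂ : Set (MvPolynomial (Fin n) A × MvPolynomial (Fin n) A)) :
    Zset A ρ T₁ ∪ Zset A ρ T₂ = Zset A ρ {r | ∃ p ∈ T₁, ∃ q ∈ T₂, r = tmul p q} := by
  ext P
  simp only [Set.mem_union, Zset, Set.mem_ofPred_eq]
  constructor
  · rintro (h | h) r ⟨p, hp, q, hq, rfl⟩ <;> rw [evalAt_tmul]
    · exact hρ.tmul_mem_left _ (h p hp)
    · exact hρ.tmul_mem_right _ (h q hq)
  · intro h
    refine or_iff_not_imp_left.2 fun h₁ q hq => ?_
    obtain ⟨p, hp, hpρ⟩ := not_forall₂.1 h₁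
    have hpq := h (tmul p q) ⟨p, hp, q, hq, rfl⟩
    rw [evalAt_tmul] at hpq
    exact (hprime _ _ hpq).resolve_left hpρ

variable (n) in
def varieties : Set (Set (Fin n → B)) :=
  {s | ∃ T : Set (MvPolynomial (Fin n) A × MvPolynomial (Fin n) A), s = Zset A ρ T}

theorem sInter_mem_varieties {S : Set (Set (Fin n → B))} (hS : S ⊆ varieties A n ρ) :
    ⋂₀ S ∈ varieties A n ρ := by
  choose T hT using fun s : S => hS s.2
  refine ⟨⋃ s : S, T s, ?_⟩
  rw [← iInter_Zset, Set.sInter_eq_iInter]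
  exact Set.iInter_congr hT

end ZeroSets

theorem isClosed_ofClosed_iff {X : Type*} (C : Set (Set X)) (empty_mem : ∅ ∈ C)
    (sInter_mem : ∀ S, S ⊆ C → ⋂₀ S ∈ C) (union_mem : ∀ s ∈ C, ∀ t ∈ C, s ∪ t ∈ C)
    (s : Set X) :
    IsClosed[TopologicalSpace.ofClosed C empty_mem sInter_mem union_mem] s ↔ s ∈ C := by
  rw [← @isOpen_compl_iff _ _ (.ofClosed C empty_mem sInter_mem union_mem)]
  exact Iff.of_eq (congrArg (· ∈ C) (compl_compl s))

/-- For a prime congruence `ρ` on `B`: `Z_ρ(T₁) ∪ Z_ρ(T₂) = Z_ρ(T₁ ∗ T₂)`, arbitrary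
intersections of `ρ`-algebraic varieties are varieties, `∅` and `Bⁿ` are varieties,
and the `ρ`-algebraic varieties are the closed sets of a topology on `Bⁿ`. -/
theorem zariski_topology_on_affine_space {B : Type*} [CommSemiring B] (A : Subsemiring B)
    (n : ℕ) (ρ : Set (B × B)) (hρ : IsCong ρ) (hproper : ρ ≠ Set.univ)
    (hprime : ∀ p q : B × B, tmul p q ∈ ρ → p ∈ ρ ∨ q ∈ ρ) :
    (∀ T₁ T₂ : Set (MvPolynomial (Fin n) A × MvPolynomial (Fin n) A),
      Zset A ρ T₁ ∪ Zset A ρ T₂ =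
        Zset A ρ {r | ∃ p ∈ T₁, ∃ q ∈ T₂, r = tmul p q}) ∧
    (∀ (ι : Type) (T : ι → Set (MvPolynomial (Fin n) A × MvPolynomial (Fin n) A)),
      ∃ T', (⋂ i, Zset A ρ (T i)) = Zset A ρ T') ∧
    ((∃ T : Set (MvPolynomial (Fin n) A × MvPolynomial (Fin n) A),
      Zset A ρ T = (∅ : Set (Fin n → B))) ∧
     (∃ T : Set (MvPolynomial (Fin n) A × MvPolynomial (Fin n) A),
      Zset A ρ T = (Set.univ : Set (Fin n → B)))) ∧
    (∃ t : TopologicalSpace (Fin n → B),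
      ∀ s : Set (Fin n → B), @IsClosed _ t s ↔
        ∃ T : Set (MvPolynomial (Fin n) A × MvPolynomial (Fin n) A), s = Zset A ρ T) := by
  have empty_mem : ∅ ∈ varieties A n ρ := ⟨_, (Zset_one_zero A ρ hρ hproper).symm⟩
  have union_mem : ∀ s ∈ varieties A n ρ, ∀ t ∈ varieties A n ρ, s ∪ t ∈ varieties A n ρ := by
    rintro _ ⟨T₁, rfl⟩ _ ⟨T₂, rfl⟩
    exact ⟨_, Zset_union_Zset A ρ hρ hprime T₁ T₂⟩
  refine ⟨Zset_union_Zset A ρ hρ hprime, fun ι T => ⟨_, iInter_Zset A ρ T⟩,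
    ⟨⟨_, Zset_one_zero A ρ hρ hproper⟩, ⟨_, Zset_empty A ρ⟩⟩,
    ⟨TopologicalSpace.ofClosed _ empty_mem (fun _ => sInter_mem_varieties A ρ) union_mem,
      isClosed_ofClosed_iff _ _ _ _⟩⟩
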